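/- The triple-well state returns periodically to its initial state: with ψ(t) = exp(-itH)·(1,0,0) for the triple-well Hamiltonian H, the probability |⟨A|ψ(t)⟩|² equals 1 exactly when t = 2kπ for integer k, and |⟨C|ψ(t)⟩|² = 1 exactly when t = (2k+1)π. -/

import Mathlib

/-!
`H` has a real orthonormal eigenbasis with eigenvalues `1, 0, -1`, so
`ψ t = ((1 + cos t)/2, i sin t / √2, (cos t - 1)/2)`.
Hence `|⟨A|ψ t⟩|² = 1` iff `cos t = 1` and `|⟨C|ψ t⟩|² = 1` iff `cos t = -1`.
-/

open Matrix

/-- The triple-well tunneling Hamiltonian. -/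
noncomputable def H : Matrix (Fin 3) (Fin 3) ℂ :=
  !![0, -(1/(Real.sqrt 2 : ℂ)), 0;
     -(1/(Real.sqrt 2 : ℂ)), 0, -(1/(Real.sqrt 2 : ℂ));
     0, -(1/(Real.sqrt 2 : ℂ)), 0]

/-- The state at time `t`, starting from `|A⟩ = (1,0,0)` (ℏ = 1). -/
noncomputable def ψ (t : ℝ) : Fin 3 → ℂ :=
  (NormedSpace.exp ((-(Complex.I * t)) • H)).mulVec ![1, 0, 0]

theorem Matrix.exp_smul_conj_diagonal {n 𝕂 : Type*} [Fintype n] [DecidableEq n] [RCLike 𝕂]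
    {P Q : Matrix n n 𝕂} (hPQ : P * Q = 1) (d : n → 𝕂) (z : 𝕂) :
    NormedSpace.exp (z • (P * diagonal d * Q)) =
      P * diagonal (fun i => NormedSpace.exp (z * d i)) * Q := by
  rw [← smul_mul, ← Matrix.mul_smul, ← diagonal_smul]
  exact (exp_units_conj ⟨P, Q, hPQ, mul_eq_one_comm.mp hPQ⟩ _).trans
    (by rw [exp_diagonal, Pi.exp_def]; rfl)

theorem sq_one_add_div_two_eq_one_iff {c : ℝ} (hc : -3 < c) :
    ((1 + c) / 2) ^ 2 = 1 ↔ c = 1 :=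
  ⟨fun h => by nlinarith, by rintro rfl; norm_num⟩

namespace TripleWell

noncomputable def hopping : ℂ := 1 / (Real.sqrt 2 : ℂ)

lemma hopping_sq : hopping ^ 2 = 1 / 2 := by
  rw [hopping, div_pow, ← Complex.ofReal_pow, Real.sq_sqrt zero_le_two]; norm_num

lemma H_eq_hopping : H = !![0, -hopping, 0; -hopping, 0, -hopping; 0, -hopping, 0] := rfl

noncomputable def eigenbasis : Matrix (Fin 3) (Fin 3) ℂ :=
  !![1/2, hopping, 1/2;
     -hopping, 0, hopping;
     1/2, -hopping, 1/2]

lemma eigenbasis_mul_transpose : eigenbasis * eigenbasisᵀ = 1 := by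
  ext i j
  fin_cases i <;> fin_cases j <;>
    simp [eigenbasis, mul_apply, Fin.sum_univ_succ] <;> grind [hopping_sq]

lemma H_eq_conj_diagonal : H = eigenbasis * diagonal ![1, 0, -1] * eigenbasisᵀ := by
  ext i j
  fin_cases i <;> fin_cases j <;>
    simp [H_eq_hopping, eigenbasis, mul_apply, Fin.sum_univ_succ, vecMul_diagonal] <;>
    grind [hopping_sq]

lemma ψ_eq (t : ℝ) :
    ψ t = ![(((1 + Real.cos t) / 2 : ℝ) : ℂ), Complex.I * Real.sin t * hopping,
      ((Real.cos t - 1) / 2 : ℝ)] := by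
  rw [ψ, H_eq_conj_diagonal, exp_smul_conj_diagonal eigenbasis_mul_transpose]
  ext i
  fin_cases i <;>
    simp [← Complex.exp_eq_exp_ℂ, Complex.cos, Complex.sin, eigenbasis, mulVec, dotProduct,
      mul_apply, Fin.sum_univ_succ, vecMul_diagonal] <;>
    grind [hopping_sq, Complex.I_sq]

lemma norm_ψ_zero_sq (t : ℝ) : ‖ψ t 0‖ ^ 2 = ((1 + Real.cos t) / 2) ^ 2 := by
  rw [ψ_eq, cons_val_zero, Complex.norm_real, Real.norm_eq_abs, sq_abs]

lemma norm_ψ_two_sq (t : ℝ) : ‖ψ t 2‖ ^ 2 = ((1 - Real.cos t) / 2) ^ 2 := by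
  rw [ψ_eq, cons_val_two, tail_cons, head_cons, Complex.norm_real, Real.norm_eq_abs, sq_abs]
  ring

end TripleWell

/-- Periodic return of the triple-well state: `|⟨A|ψ(t)⟩|² = 1` exactly when `t = 2kπ`,
and `|⟨C|ψ(t)⟩|² = 1` exactly when `t = (2k+1)π`, for integer `k`. -/
theorem stmt4 (t : ℝ) :
    (‖ψ t 0‖ ^ 2 = 1 ↔ ∃ k : ℤ, t = 2 * k * Real.pi) ∧
    (‖ψ t 2‖ ^ 2 = 1 ↔ ∃ k : ℤ, t = (2 * k + 1) * Real.pi) := by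
  have hcos_ge := Real.neg_one_le_cos t
  have hcos_le := Real.cos_le_one t
  constructor
  · rw [TripleWell.norm_ψ_zero_sq, sq_one_add_div_two_eq_one_iff (by linarith),
      Real.cos_eq_one_iff]
    exact exists_congr fun k => ⟨fun h => by linarith, fun h => by linarith⟩
  · rw [TripleWell.norm_ψ_two_sq, sub_eq_add_neg, sq_one_add_div_two_eq_one_iff (by linarith),
      neg_eq_iff_eq_neg, Real.cos_eq_neg_one_iff]
    exact exists_congr fun k => ⟨fun h => by linarith, fun h => by linarith⟩
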